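/- arXiv:math/0609354 — 3 statements merged into one kernel-verified Lean document; each statement's English description precedes it below -/
import Mathlib

section
/- Let A be a unital ring with sr(A) = n < ∞ and er(A) < n, and let 0 → I → B → A → 0 be a unital extension. Suppose I has a local unit (g_i) consisting of idempotents such that sr(g_i I g_i) ≤ n and er(g_i I g_i) < n for all i. Then sr(B) = n and er(B) < n. -/
open scoped BigOperators

variable {R : Type*}

/-- A column is unimodular if its entries admit a left Bezout relation summing to `1`. -/
def Unimodular [Ring R] {m : ℕ} (b : Fin m → R) : Prop :=
  ∃ a : Fin m → R, ∑ i, a i * b i = 1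

/-- An `(n+1)`-column is reducible if adding left multiples of the last entry to the first
`n` entries yields a unimodular `n`-column. -/
def Reducible [Ring R] {n : ℕ} (b : Fin (n + 1) → R) : Prop :=
  ∃ v : Fin n → R, Unimodular (fun i : Fin n => b i.castSucc + v i * b (Fin.last n))

/-- The stable range condition: every unimodular column of length `> n` is reducible. -/
def SRleq (R : Type*) [Ring R] (n : ℕ) : Prop :=
  ∀ m : ℕ, n ≤ m → ∀ b : Fin (m + 1) → R, Unimodular b → Reducible b

/-- The Bass stable rank, as an element of `ℕ∞`. -/
noncomputable def sr (R : Type*) [Ring R] : ℕ∞ :=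
  sInf {c : ℕ∞ | ∃ n : ℕ, c = n ∧ SRleq R n}

/-- Elementary matrices (transvections). -/
def IsElemMat [Ring R] {t : ℕ} (M : Matrix (Fin t) (Fin t) R) : Prop :=
  ∃ (i j : Fin t) (c : R), i ≠ j ∧ M = 1 + Matrix.single i j c

/-- `ERleq R k` : for every `t ≥ k + 1`, the elementary group `E_t(R)` acts transitively on
unimodular `t`-columns. -/
def ERleq (R : Type*) [Ring R] (k : ℕ) : Prop :=
  ∀ t : ℕ, k + 1 ≤ t → ∀ b c : Fin t → R, Unimodular b → Unimodular c →
    ∃ L : List (Matrix (Fin t) (Fin t) R), (∀ M ∈ L, IsElemMat M) ∧ L.prod.mulVec b = c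

/-- The elementary rank, as an element of `ℕ∞`. -/
noncomputable def er (R : Type*) [Ring R] : ℕ∞ :=
  sInf {c : ℕ∞ | ∃ k : ℕ, c = k ∧ ERleq R k}

/-- Vaserstein's `I`-unimodular columns relative to a two-sided ideal `I` of `R`:
the first entry is congruent to `1` mod `I`, the others lie in `I`, and there is a Bezout
relation of the same shape. -/
def RelUnimodular [Ring R] (I : TwoSidedIdeal R) {m : ℕ} (b : Fin (m + 1) → R) : Prop :=
  b 0 - 1 ∈ I ∧ (∀ i, i ≠ 0 → b i ∈ I) ∧
    ∃ a : Fin (m + 1) → R, (a 0 - 1 ∈ I) ∧ (∀ i, i ≠ 0 → a i ∈ I) ∧ ∑ i, a i * b i = 1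

def RelReducible [Ring R] (I : TwoSidedIdeal R) {m : ℕ} (b : Fin (m + 2) → R) : Prop :=
  ∃ v : Fin (m + 1) → R, (∀ i, v i ∈ I) ∧
    RelUnimodular I (fun i : Fin (m + 1) => b i.castSucc + v i * b (Fin.last (m + 1)))

/-- Relative (Vaserstein) stable rank `≤ n` for a two-sided ideal: every `I`-unimodular
column of length at least `n + 1` is reducible. -/
def RelSRleq [Ring R] (I : TwoSidedIdeal R) (n : ℕ) : Prop :=
  ∀ m : ℕ, n ≤ m + 1 → ∀ b : Fin (m + 2) → R, RelUnimodular I b → RelReducible I b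

/-- The relative stable rank of a two-sided ideal, as an element of `ℕ∞`. -/
noncomputable def relSr [Ring R] (I : TwoSidedIdeal R) : ℕ∞ :=
  sInf {c : ℕ∞ | ∃ n : ℕ, c = n ∧ RelSRleq I n}

/-- A local unit on a subset `S` of a ring: an increasing net of idempotents contained in `S`
which act as a unit on every element of `S`. -/
structure LocalUnit {R : Type*} [NonUnitalRing R] (S : Set R) where
  ι : Type
  [pre : Preorder ι]
  directed : ∀ i j : ι, ∃ k, i ≤ k ∧ j ≤ k
  e : ι → R
  mem : ∀ i, e i ∈ S
  idem : ∀ i, e i * e i = e i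
  incr : ∀ i j, i ≤ j → e i * e j = e i ∧ e j * e i = e i
  unit : ∀ a ∈ S, ∃ i, a * e i = a ∧ e i * a = a

/-- The corner `g·R·g` of a ring `R` at `g`, realized as the set of elements fixed by
`x ↦ g * x * g`. -/
def Corner {B : Type*} [Ring B] (g : B) : Type _ := {x : B // g * x * g = x}

/-- For an idempotent `g`, the corner `g·B·g` is a unital ring with identity `g`. -/
def cornerRing {B : Type*} [Ring B] {g : B} (hg : g * g = g) : Ring (Corner g) := by
  have lmul : ∀ x : B, g * x * g = x → g * x = x := by
    intro x hx
    conv_lhs => rw [← hx]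
    rw [← mul_assoc, ← mul_assoc, hg, hx]
  have rmul : ∀ x : B, g * x * g = x → x * g = x := by
    intro x hx
    conv_lhs => rw [← hx]
    rw [mul_assoc, mul_assoc, hg, ← mul_assoc, hx]
  letI : Zero (Corner g) := ⟨⟨0, by simp⟩⟩
  letI : One (Corner g) := ⟨⟨g, by rw [hg, hg]⟩⟩
  letI : Add (Corner g) := ⟨fun x y => ⟨x.1 + y.1, by rw [mul_add, add_mul, x.2, y.2]⟩⟩
  letI : Neg (Corner g) := ⟨fun x => ⟨-x.1, by rw [mul_neg, neg_mul, x.2]⟩⟩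
  letI : Mul (Corner g) := ⟨fun x y => ⟨x.1 * y.1, by
    have h : g * (x.1 * y.1) * g = (g * x.1) * (y.1 * g) := by
      rw [← mul_assoc, mul_assoc (g * x.1)]
    rw [h, lmul x.1 x.2, rmul y.1 y.2]⟩⟩
  exact Ring.ofMinimalAxioms
    (fun a b c => Subtype.ext (add_assoc a.1 b.1 c.1))
    (fun a => Subtype.ext (zero_add a.1))
    (fun a => Subtype.ext (neg_add_cancel a.1))
    (fun a b c => Subtype.ext (mul_assoc a.1 b.1 c.1))
    (fun a => Subtype.ext (lmul a.1 a.2))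
    (fun a => Subtype.ext (rmul a.1 a.2))
    (fun a b c => Subtype.ext (mul_add a.1 b.1 c.1))
    (fun a b c => Subtype.ext (add_mul a.1 b.1 c.1))

/-!
Modulo `I`, a unimodular column over `B` can be reduced (`sr A ≤ n`) and then moved to `e₀`
(`er A < n`) by elementary matrices over `A`, and these lift to `B`; so it suffices to treat
columns congruent to `e₀` modulo `I`. Such a column involves finitely many elements of `I`,
which are all fixed by a single idempotent `g` of the local unit, and then it reads
`(1 - g) e₀ + x` for a column `x` over the corner `gBg`. This column is unimodular over `B`
exactly when `x` is unimodular over `gBg`, and an elementary matrix `M` over `gBg` acts on it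
through the elementary matrix `diag (1 - g) + M` over `B`. The hypotheses on the corners thus
give `sr B ≤ n` and `er B < n`, while `sr B ≥ sr A = n` because the stable rank does not
increase under quotients.
-/

open Matrix

attribute [instance] LocalUnit.pre

section Elementary

variable [Ring R] {t : ℕ}

def elemSubmonoid (R : Type*) [Ring R] (t : ℕ) : Submonoid (Matrix (Fin t) (Fin t) R) :=
  Submonoid.closure {M | IsElemMat M}

lemma mem_elemSubmonoid_iff {M : Matrix (Fin t) (Fin t) R} :
    M ∈ elemSubmonoid R t ↔
      ∃ L : List (Matrix (Fin t) (Fin t) R), (∀ N ∈ L, IsElemMat N) ∧ L.prod = M :=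
  ⟨Submonoid.exists_list_of_mem_closure, fun ⟨_, hL, hM⟩ =>
    hM ▸ Submonoid.list_prod_mem _ fun N hN => Submonoid.subset_closure (hL N hN)⟩

lemma IsElemMat.exists_mul_eq_one {M : Matrix (Fin t) (Fin t) R} (hM : IsElemMat M) :
    ∃ N, IsElemMat N ∧ N * M = 1 := by
  obtain ⟨i, j, c, hij, rfl⟩ := hM
  refine ⟨1 + single i j (-c), ⟨i, j, -c, hij, rfl⟩, ?_⟩
  rw [mul_add, add_mul, add_mul, single_mul_single_of_ne _ _ _ _ hij.symm, one_mul, mul_one,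
    one_mul, add_zero, add_assoc, ← single_add, neg_add_cancel, single_zero, add_zero]

lemma exists_mul_eq_one_of_mem_elemSubmonoid {M : Matrix (Fin t) (Fin t) R}
    (hM : M ∈ elemSubmonoid R t) : ∃ N ∈ elemSubmonoid R t, N * M = 1 := by
  induction hM using Submonoid.closure_induction with
  | mem M hM =>
    obtain ⟨N, hN, hNM⟩ := IsElemMat.exists_mul_eq_one hM
    exact ⟨N, Submonoid.subset_closure hN, hNM⟩
  | one => exact ⟨1, one_mem _, mul_one 1⟩
  | mul M M' _ _ ih ih' =>
    obtain ⟨N, hN, hNM⟩ := ih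
    obtain ⟨N', hN', hNM'⟩ := ih'
    refine ⟨N' * N, mul_mem hN' hN, ?_⟩
    rw [mul_assoc, ← mul_assoc N, hNM, one_mul, hNM']

lemma Unimodular.mulVec_of_mul_eq_one {b : Fin t → R} (hb : Unimodular b)
    {M N : Matrix (Fin t) (Fin t) R} (hNM : N * M = 1) : Unimodular (M *ᵥ b) := by
  obtain ⟨a, ha⟩ := hb
  refine ⟨a ᵥ* N, ?_⟩
  change (a ᵥ* N) ⬝ᵥ (M *ᵥ b) = 1
  rwa [dotProduct_mulVec, vecMul_vecMul, hNM, vecMul_one]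

lemma Unimodular.mulVec {b : Fin t → R} (hb : Unimodular b) {M : Matrix (Fin t) (Fin t) R}
    (hM : M ∈ elemSubmonoid R t) : Unimodular (M *ᵥ b) :=
  let ⟨_, _, hNM⟩ := exists_mul_eq_one_of_mem_elemSubmonoid hM
  hb.mulVec_of_mul_eq_one hNM

lemma unimodular_single (i : Fin t) : Unimodular (Pi.single i (1 : R)) :=
  ⟨Pi.single i 1, by simp [Pi.single_apply]⟩

lemma ERleq.exists_mulVec_eq_single {k : ℕ} (h : ERleq R k) (hkt : k ≤ t)
    {b : Fin (t + 1) → R} (hb : Unimodular b) :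
    ∃ M ∈ elemSubmonoid R (t + 1), M *ᵥ b = Pi.single 0 1 := by
  obtain ⟨L, hL, hLb⟩ := h (t + 1) (by omega) b _ hb (unimodular_single 0)
  exact ⟨L.prod, mem_elemSubmonoid_iff.2 ⟨L, hL, rfl⟩, hLb⟩

lemma erleq_of_forall_exists_mulVec_eq_single {k : ℕ}
    (h : ∀ t, k ≤ t → ∀ b : Fin (t + 1) → R, Unimodular b →
      ∃ M ∈ elemSubmonoid R (t + 1), M *ᵥ b = Pi.single 0 1) : ERleq R k := by
  rintro t' hkt b c hb hc
  obtain ⟨t, rfl⟩ := Nat.exists_eq_add_one_of_ne_zero (by omega : t' ≠ 0)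
  obtain ⟨M, hM, hMb⟩ := h t (by omega) b hb
  obtain ⟨M', hM', hM'c⟩ := h t (by omega) c hc
  obtain ⟨N, hN, hNM'⟩ := exists_mul_eq_one_of_mem_elemSubmonoid hM'
  obtain ⟨L, hL, hLprod⟩ := mem_elemSubmonoid_iff.1 (mul_mem hN hM)
  refine ⟨L, hL, ?_⟩
  rw [hLprod, ← mulVec_mulVec, hMb, ← hM'c, mulVec_mulVec, hNM', one_mulVec]

end Elementary

section Rank

variable [Ring R]

lemma SRleq.mono {n n' : ℕ} (h : SRleq R n) (hn : n ≤ n') : SRleq R n' :=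
  fun m hm => h m (hn.trans hm)

lemma ERleq.mono {k k' : ℕ} (h : ERleq R k) (hk : k ≤ k') : ERleq R k' :=
  fun t ht => h t (by omega)

lemma exists_le_of_sInf_le {P : ℕ → Prop} {n : ℕ}
    (h : sInf {c : ℕ∞ | ∃ k : ℕ, c = k ∧ P k} ≤ n) : ∃ k ≤ n, P k := by
  obtain ⟨_, ⟨k, rfl, hk⟩, hlt⟩ :=
    sInf_lt_iff.1 (h.trans_lt (ENat.natCast_lt_natCast.2 n.lt_succ_self))
  exact ⟨k, Nat.lt_succ_iff.1 (ENat.natCast_lt_natCast.1 hlt), hk⟩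

lemma srleq_of_sr_le {n : ℕ} (h : sr R ≤ n) : SRleq R n := by
  obtain ⟨k, hk, hP⟩ := exists_le_of_sInf_le h
  exact hP.mono hk

lemma sr_le_of_srleq {n : ℕ} (h : SRleq R n) : sr R ≤ n := sInf_le ⟨n, rfl, h⟩

lemma erleq_of_er_lt {k : ℕ} (h : er R < (k + 1 : ℕ)) : ERleq R k := by
  obtain ⟨k', hk, hP⟩ := exists_le_of_sInf_le (Order.le_of_lt_add_one (by exact_mod_cast h))
  exact hP.mono hk

lemma er_le_of_erleq {k : ℕ} (h : ERleq R k) : er R ≤ k := sInf_le ⟨k, rfl, h⟩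

end Rank

section Quotient

variable {A B : Type*} [Ring A] [Ring B] (f : B →+* A)

lemma Unimodular.map {t : ℕ} {b : Fin t → B} (hb : Unimodular b) : Unimodular (f ∘ b) := by
  obtain ⟨a, ha⟩ := hb
  exact ⟨f ∘ a, by simpa [map_sum] using congrArg f ha⟩

lemma Reducible.map {t : ℕ} {b : Fin (t + 1) → B} (hb : Reducible b) : Reducible (f ∘ b) := by
  obtain ⟨v, hv⟩ := hb
  exact ⟨f ∘ v, by simpa [Function.comp_def] using hv.map f⟩

lemma map_elemSubmonoid (hf : Function.Surjective f) (t : ℕ) :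
    (elemSubmonoid B t).map f.mapMatrix = elemSubmonoid A t := by
  rw [elemSubmonoid, MonoidHom.map_mclosure, elemSubmonoid]
  congr 1
  ext M
  constructor
  · rintro ⟨_, ⟨i, j, c, hij, rfl⟩, rfl⟩
    exact ⟨i, j, f c, hij, by rw [map_add, map_one, RingHom.mapMatrix_apply, map_single]⟩
  · rintro ⟨i, j, c, hij, rfl⟩
    obtain ⟨c, rfl⟩ := hf c
    exact ⟨1 + single i j c, ⟨i, j, c, hij, rfl⟩,
      by rw [map_add, map_one, RingHom.mapMatrix_apply, map_single]⟩

lemma exists_unimodular_lift_of_srleq (hf : Function.Surjective f) {k m : ℕ} (hB : SRleq B k)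
    (hkm : k ≤ m) {b : Fin (m + 1) → A} (hb : Unimodular b) :
    ∃ c : Fin (m + 1) → B, Unimodular c ∧ f ∘ c = b := by
  obtain ⟨a, ha⟩ := hb
  choose b' hb' using fun i => hf (b i)
  choose a' ha' using fun i => hf (a i)
  set z := 1 - ∑ i, a' i * b' i
  have hc : Unimodular (Fin.snoc b' z : Fin (m + 2) → B) :=
    ⟨Fin.snoc a' 1, by simp [Fin.sum_univ_castSucc, z]⟩
  obtain ⟨v, hv⟩ := hB (m + 1) (by omega) _ hc
  refine ⟨_, hv, funext fun i => ?_⟩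
  simp [z, hb', ha', ha]

lemma srleq_of_surjective (hf : Function.Surjective f) {k : ℕ} (hB : SRleq B k) : SRleq A k := by
  intro m hm b hb
  obtain ⟨c, hc, rfl⟩ := exists_unimodular_lift_of_srleq f hf hB hm hb
  exact (hB m hm c hc).map f

lemma sr_le_sr_of_surjective (hf : Function.Surjective f) : sr A ≤ sr B :=
  sInf_le_sInf fun _ ⟨k, hc, hk⟩ => ⟨k, hc, srleq_of_surjective f hf hk⟩

end Quotient

namespace NonUnitalRingHom

variable {B C : Type*} [Ring B] [Ring C] (φ : C →ₙ+* B)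

lemma one_sub_map_one_mul (x : C) : (1 - φ 1) * φ x = 0 := by
  rw [sub_mul, one_mul, ← map_mul, one_mul, sub_self]

lemma map_mul_one_sub_map_one (x : C) : φ x * (1 - φ 1) = 0 := by
  rw [mul_sub, mul_one, ← map_mul, mul_one, sub_self]

lemma one_sub_map_one_mul_self : (1 - φ 1) * (1 - φ 1) = 1 - φ 1 := by
  rw [mul_sub, mul_one, one_sub_map_one_mul, sub_zero]

lemma single_add_comp_single {n : Type*} [DecidableEq n] (i₀ : n) :
    Pi.single i₀ (1 - φ 1) + φ ∘ Pi.single i₀ 1 = Pi.single i₀ 1 := by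
  ext i
  by_cases h : i = i₀ <;> simp [h]

lemma map_mulVec_comp {n : Type*} [Fintype n] (M : Matrix n n C) (χ : n → C) :
    M.map φ *ᵥ (φ ∘ χ) = φ ∘ (M *ᵥ χ) := by
  ext i
  simp [mulVec, dotProduct, map_sum]

variable {n : Type*} [Fintype n] [DecidableEq n]

def unitalMapMatrix : Matrix n n C →* Matrix n n B where
  toFun M := diagonal (fun _ => 1 - φ 1) + M.map φ
  map_one' := by
    ext i j
    by_cases h : i = j <;> simp [one_apply, h]
  map_mul' M N := by
    have hN : diagonal (fun _ => 1 - φ 1) * N.map φ = 0 := by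
      ext i j
      simp [one_sub_map_one_mul]
    have hM : M.map φ * diagonal (fun _ => 1 - φ 1) = 0 := by
      ext i j
      simp [map_mul_one_sub_map_one]
    have hMN : (M * N).map φ = M.map φ * N.map φ := by
      ext i j
      simp [mul_apply, map_sum]
    rw [add_mul, mul_add, mul_add, diagonal_mul_diagonal, one_sub_map_one_mul_self, hN, hM, hMN,
      add_zero, zero_add]

lemma unitalMapMatrix_one_add_single (i j : n) (c : C) :
    φ.unitalMapMatrix (1 + single i j c) = 1 + single i j (φ c) := by
  have h := (φ.unitalMapMatrix (n := n)).map_one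
  simp only [unitalMapMatrix, MonoidHom.coe_mk, OneHom.coe_mk] at h ⊢
  rw [Matrix.map_add _ (map_add φ), map_single, ← add_assoc, h]

lemma unitalMapMatrix_mem_elemSubmonoid {t : ℕ} {M : Matrix (Fin t) (Fin t) C}
    (hM : M ∈ elemSubmonoid C t) : φ.unitalMapMatrix M ∈ elemSubmonoid B t := by
  refine (Submonoid.closure_le.2 ?_ hM : M ∈ (elemSubmonoid B t).comap φ.unitalMapMatrix)
  rintro _ ⟨i, j, c, hij, rfl⟩
  rw [SetLike.mem_coe, Submonoid.mem_comap, unitalMapMatrix_one_add_single]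
  exact Submonoid.subset_closure ⟨i, j, φ c, hij, rfl⟩

lemma unitalMapMatrix_mulVec (M : Matrix n n C) (i₀ : n) (χ : n → C) :
    φ.unitalMapMatrix M *ᵥ (Pi.single i₀ (1 - φ 1) + φ ∘ χ)
      = Pi.single i₀ (1 - φ 1) + φ ∘ (M *ᵥ χ) := by
  ext i
  by_cases h : i = i₀ <;>
  simp [h, unitalMapMatrix, add_mulVec, mulVec_add, ← map_mulVec_comp, mulVec_single,
    one_sub_map_one_mul, map_mul_one_sub_map_one, one_sub_map_one_mul_self]

lemma single_add_comp_dotProduct (i₀ : n) (a χ : n → C) :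
    (Pi.single i₀ (1 - φ 1) + φ ∘ a) ⬝ᵥ (Pi.single i₀ (1 - φ 1) + φ ∘ χ)
      = 1 - φ 1 + φ (a ⬝ᵥ χ) := by
  simp [dotProduct, add_mul, mul_add, Finset.sum_add_distrib, Pi.single_apply, map_sum,
    one_sub_map_one_mul, map_mul_one_sub_map_one, one_sub_map_one_mul_self]

end NonUnitalRingHom

section UnitalMap

variable {B C : Type*} [Ring B] [Ring C] (φ : C →ₙ+* B)

lemma Unimodular.single_add_comp {t : ℕ} {χ : Fin t → C} (hχ : Unimodular χ) (i₀ : Fin t) :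
    Unimodular (Pi.single i₀ (1 - φ 1) + φ ∘ χ) := by
  obtain ⟨a, ha⟩ := hχ
  refine ⟨Pi.single i₀ (1 - φ 1) + φ ∘ a, ?_⟩
  change _ ⬝ᵥ _ = _
  rw [φ.single_add_comp_dotProduct, show a ⬝ᵥ χ = 1 from ha, sub_add_cancel]

lemma Reducible.single_add_comp {t : ℕ} {χ : Fin (t + 2) → C} (hχ : Reducible χ) :
    Reducible (Pi.single 0 (1 - φ 1) + φ ∘ χ) := by
  obtain ⟨v, hv⟩ := hχ
  refine ⟨φ ∘ v, ?_⟩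
  convert hv.single_add_comp φ 0 using 1
  ext i
  simp [Pi.single_apply, add_assoc]

end UnitalMap

section Corner

variable [Ring R] {g : R}

def Corner.subtype (hg : g * g = g) : letI := cornerRing hg; Corner g →ₙ+* R :=
  letI := cornerRing hg
  { toFun := Subtype.val, map_zero' := rfl, map_add' := fun _ _ => rfl,
    map_mul' := fun _ _ => rfl }

lemma Corner.subtype_apply (hg : g * g = g) (x : Corner g) : Corner.subtype hg x = x.1 := rfl

lemma Corner.val_mul_self (hg : g * g = g) (x : Corner g) : x.1 * g = x.1 := by
  conv_lhs => rw [← x.2]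
  rw [mul_assoc, hg, x.2]

lemma Corner.self_mul_val (hg : g * g = g) (x : Corner g) : g * x.1 = x.1 := by
  conv_lhs => rw [← x.2]
  rw [← mul_assoc, ← mul_assoc, hg, x.2]

lemma exists_corner_of_fixes (hg : g * g = g) {t : ℕ} {y : Fin (t + 1) → R}
    (hy : ∀ j, y j * g = y j ∧ g * y j = y j) :
    ∃ χ : Fin (t + 1) → Corner g,
      Pi.single 0 1 + y = Pi.single 0 (1 - g) + Corner.subtype hg ∘ χ := by
  refine ⟨fun j => ⟨y j + Pi.single (M := fun _ => R) 0 g j, ?_⟩, funext fun j => ?_⟩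
  · obtain ⟨hr, hl⟩ := hy j
    by_cases h : j = 0
    · subst h
      rw [Pi.single_eq_same, mul_add, add_mul, hl, hr, hg, hg]
    · rw [Pi.single_eq_of_ne h, add_zero, hl, hr]
  · change _ = _ + (y j + Pi.single (M := fun _ => R) 0 g j)
    rw [Pi.add_apply]
    by_cases h : j = 0
    · subst h
      simp only [Pi.single_eq_same]
      abel
    · simp [h]

lemma Unimodular.of_single_add_corner (hg : g * g = g) {t : ℕ} {i₀ : Fin t}
    {χ : Fin t → Corner g}
    (h : Unimodular (Pi.single i₀ (1 - g) + Corner.subtype hg ∘ χ)) :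
    @Unimodular _ (cornerRing hg) _ χ := by
  let := cornerRing hg
  set x := Pi.single i₀ (1 - g) + Corner.subtype hg ∘ χ
  obtain ⟨a, ha⟩ := h
  have hx : ∀ j, x j * g = (χ j).1 := fun j => by
    by_cases h : j = i₀
    · subst h
      simp [x, add_mul, sub_mul, hg, Corner.subtype_apply, Corner.val_mul_self hg (χ j)]
    · simp [x, h, Corner.subtype_apply, Corner.val_mul_self hg (χ j)]
  refine ⟨fun j => ⟨g * a j * g, by rw [← mul_assoc, ← mul_assoc, hg, mul_assoc, hg]⟩,
    Subtype.ext ?_⟩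
  change Corner.subtype hg (∑ j, _) = g
  rw [map_sum]
  calc ∑ j, g * a j * g * (χ j).1 = ∑ j, g * (a j * x j) * g :=
        Finset.sum_congr rfl fun j _ => by
          rw [mul_assoc _ g, Corner.self_mul_val hg (χ j), ← hx, mul_assoc, mul_assoc, mul_assoc]
    _ = g := by rw [← Finset.sum_mul, ← Finset.mul_sum, ha, mul_one, hg]

end Corner

section LocalUnit

lemma LocalUnit.exists_forall_fixes [NonUnitalRing R] {S : Set R} (lu : LocalUnit S)
    {κ : Type*} [Finite κ] [Nonempty κ] (x : κ → R) (hx : ∀ k, x k ∈ S) :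
    ∃ i, ∀ k, x k * lu.e i = x k ∧ lu.e i * x k = x k := by
  obtain ⟨k₀⟩ := ‹Nonempty κ›
  have : Nonempty lu.ι := ⟨(lu.unit _ (hx k₀)).choose⟩
  have : IsDirectedOrder lu.ι := ⟨lu.directed⟩
  have hev : ∀ k, ∀ᶠ i in Filter.atTop, x k * lu.e i = x k ∧ lu.e i * x k = x k := by
    intro k
    obtain ⟨i, hr, hl⟩ := lu.unit _ (hx k)
    filter_upwards [Filter.eventually_ge_atTop i] with j hij
    obtain ⟨hij, hji⟩ := lu.incr i j hij
    exact ⟨by rw [← hr, mul_assoc, hij], by rw [← hl, ← mul_assoc, hji]⟩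
  exact (Filter.eventually_all.2 hev).exists

lemma LocalUnit.exists_corner [Ring R] {I : TwoSidedIdeal R} (lu : LocalUnit (I : Set R))
    {t : ℕ} {y : Fin (t + 1) → R} (hy : ∀ j, y j ∈ I) :
    ∃ (i : lu.ι) (χ : Fin (t + 1) → Corner (lu.e i)),
      Pi.single 0 1 + y = Pi.single 0 (1 - lu.e i) + Corner.subtype (lu.idem i) ∘ χ := by
  obtain ⟨i, hi⟩ := lu.exists_forall_fixes y hy
  exact ⟨i, exists_corner_of_fixes (lu.idem i) hi⟩

end LocalUnit

section ColumnOperations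

variable [Ring R] {m : ℕ} {c : Fin m → R} {s : R}

lemma unimodular_snoc_iff :
    Unimodular (Fin.snoc c s : Fin (m + 1) → R) ↔
      ∃ (a : Fin m → R) (r : R), a ⬝ᵥ c + r * s = 1 :=
  ⟨fun ⟨a, ha⟩ => ⟨Fin.init a, a (Fin.last m), by
      simpa [Fin.sum_univ_castSucc, dotProduct, Fin.init] using ha⟩,
    fun ⟨a, r, h⟩ => ⟨Fin.snoc a r, by simpa [Fin.sum_univ_castSucc, dotProduct] using h⟩⟩

lemma reducible_snoc_iff :
    Reducible (Fin.snoc c s : Fin (m + 1) → R) ↔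
      ∃ v : Fin m → R, Unimodular (c + fun i => v i * s) := by
  simp [Reducible, Pi.add_def]

lemma Unimodular.snoc_add_mul (h : Unimodular (Fin.snoc c s : Fin (m + 1) → R))
    (v : Fin m → R) :
    Unimodular (Fin.snoc (c + fun i => v i * s) s : Fin (m + 1) → R) := by
  obtain ⟨a, r, h⟩ := unimodular_snoc_iff.1 h
  refine unimodular_snoc_iff.2 ⟨a, r - a ⬝ᵥ v, ?_⟩
  rw [← h, dotProduct_add]
  simp [dotProduct, Finset.sum_mul, mul_assoc, sub_mul]

lemma Unimodular.snoc_mulVec (h : Unimodular (Fin.snoc c s : Fin (m + 1) → R))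
    {M : Matrix (Fin m) (Fin m) R} (hM : M ∈ elemSubmonoid R m) :
    Unimodular (Fin.snoc (M *ᵥ c) s : Fin (m + 1) → R) := by
  obtain ⟨a, r, h⟩ := unimodular_snoc_iff.1 h
  obtain ⟨N, -, hNM⟩ := exists_mul_eq_one_of_mem_elemSubmonoid hM
  refine unimodular_snoc_iff.2 ⟨a ᵥ* N, r, ?_⟩
  rwa [dotProduct_mulVec, vecMul_vecMul, hNM, vecMul_one]

lemma Reducible.of_snoc_add_mul {v : Fin m → R}
    (h : Reducible (Fin.snoc (c + fun i => v i * s) s : Fin (m + 1) → R)) :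
    Reducible (Fin.snoc c s : Fin (m + 1) → R) := by
  obtain ⟨w, hw⟩ := reducible_snoc_iff.1 h
  refine reducible_snoc_iff.2 ⟨v + w, ?_⟩
  convert hw using 1
  ext i
  simp [add_mul, add_assoc]

lemma Reducible.of_snoc_mulVec {M : Matrix (Fin m) (Fin m) R} (hM : M ∈ elemSubmonoid R m)
    (h : Reducible (Fin.snoc (M *ᵥ c) s : Fin (m + 1) → R)) :
    Reducible (Fin.snoc c s : Fin (m + 1) → R) := by
  obtain ⟨w, hw⟩ := reducible_snoc_iff.1 h
  obtain ⟨N, hN, hNM⟩ := exists_mul_eq_one_of_mem_elemSubmonoid hM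
  refine reducible_snoc_iff.2 ⟨N *ᵥ w, ?_⟩
  convert hw.mulVec hN using 1
  rw [mulVec_add, mulVec_mulVec, hNM, one_mulVec]
  congr 1
  ext i
  simp [mulVec, dotProduct, Finset.sum_mul, mul_assoc]

lemma Reducible.of_snoc_mul_left {a : R}
    (h : Reducible (Fin.snoc c (a * s) : Fin (m + 1) → R)) :
    Reducible (Fin.snoc c s : Fin (m + 1) → R) := by
  obtain ⟨w, hw⟩ := reducible_snoc_iff.1 h
  exact reducible_snoc_iff.2 ⟨fun i => w i * a, by simpa [mul_assoc] using hw⟩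

end ColumnOperations

-- The new last entry lies in every ideal that contains `1 - c 0`.
lemma Unimodular.snoc_one_sub_mul [Ring R] {m : ℕ} {c : Fin (m + 1) → R} {s : R}
    (h : Unimodular (Fin.snoc c s : Fin (m + 2) → R)) :
    ∃ r, Unimodular (Fin.snoc c ((1 - c 0) * r * s) : Fin (m + 2) → R) := by
  obtain ⟨a, r, h⟩ := unimodular_snoc_iff.1 h
  refine ⟨r, unimodular_snoc_iff.2 ⟨Pi.single 0 1 + (1 - c 0) • a, 1, ?_⟩⟩
  rw [add_dotProduct, smul_dotProduct, single_one_dotProduct, one_mul, smul_eq_mul,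
    mul_assoc, add_assoc, ← mul_add, h, mul_one, add_sub_cancel]

section LocalUnitCorner

variable [Ring R] {I : TwoSidedIdeal R} (lu : LocalUnit (I : Set R))

lemma LocalUnit.exists_elem_mulVec_eq_single {k t : ℕ}
    (hcorner : ∀ i, @ERleq (Corner (lu.e i)) (cornerRing (lu.idem i)) k) (hkt : k ≤ t)
    {y : Fin (t + 1) → R} (hy : ∀ j, y j ∈ I) (hu : Unimodular (Pi.single 0 1 + y)) :
    ∃ M ∈ elemSubmonoid R (t + 1), M *ᵥ (Pi.single 0 1 + y) = Pi.single 0 1 := by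
  obtain ⟨i, χ, hχ⟩ := lu.exists_corner hy
  let := cornerRing (lu.idem i)
  rw [hχ] at hu ⊢
  obtain ⟨M, hM, hMχ⟩ :=
    (hcorner i).exists_mulVec_eq_single hkt (hu.of_single_add_corner (lu.idem i))
  refine ⟨_, (Corner.subtype (lu.idem i)).unitalMapMatrix_mem_elemSubmonoid hM, ?_⟩
  have := (Corner.subtype (lu.idem i)).unitalMapMatrix_mulVec M 0 χ
  rwa [hMχ, NonUnitalRingHom.single_add_comp_single] at this

lemma LocalUnit.reducible_single_add {n m : ℕ}
    (hcorner : ∀ i, @SRleq (Corner (lu.e i)) (cornerRing (lu.idem i)) n) (hnm : n ≤ m + 1)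
    {y : Fin (m + 2) → R} (hy : ∀ j, y j ∈ I) (hu : Unimodular (Pi.single 0 1 + y)) :
    Reducible (Pi.single 0 1 + y) := by
  obtain ⟨i, χ, hχ⟩ := lu.exists_corner hy
  let := cornerRing (lu.idem i)
  rw [hχ] at hu ⊢
  exact (hcorner i (m + 1) hnm χ (hu.of_single_add_corner (lu.idem i))).single_add_comp
    (Corner.subtype (lu.idem i))

lemma LocalUnit.reducible_snoc_single_add {n m : ℕ}
    (hcorner : ∀ i, @SRleq (Corner (lu.e i)) (cornerRing (lu.idem i)) n) (hnm : n ≤ m + 1)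
    {y : Fin (m + 1) → R} (hy : ∀ j, y j ∈ I) {s : R}
    (hu : Unimodular (Fin.snoc (Pi.single 0 1 + y) s : Fin (m + 2) → R)) :
    Reducible (Fin.snoc (Pi.single 0 1 + y) s : Fin (m + 2) → R) := by
  obtain ⟨r, hr⟩ := hu.snoc_one_sub_mul
  refine Reducible.of_snoc_mul_left (a := (1 - (1 + y 0)) * r) ?_
  have hsnoc : ∀ x : R, (Fin.snoc (Pi.single 0 1 + y) x : Fin (m + 2) → R)
      = Pi.single 0 1 + Fin.snoc y x := fun x => by
    ext j
    refine Fin.lastCases ?_ (fun j => ?_) j <;> simp [Pi.single_apply]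
  rw [hsnoc] at hr ⊢
  refine lu.reducible_single_add hcorner hnm (fun j => Fin.lastCases ?_ (fun j => ?_) j) hr
  · simpa using I.mul_mem_right _ _ (I.mul_mem_right _ r (I.neg_mem (hy 0)))
  · simpa using hy j

end LocalUnitCorner

section Extension

variable {A B : Type*} [Ring A] [Ring B] (f : B →+* A)

lemma exists_elem_mulVec_eq_single_add_ker (hf : Function.Surjective f) {k t : ℕ}
    (hA : ERleq A k) (hkt : k ≤ t) {b : Fin (t + 1) → B} (hb : Unimodular (f ∘ b)) :
    ∃ Q ∈ elemSubmonoid B (t + 1), ∃ y : Fin (t + 1) → B,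
      (∀ j, y j ∈ TwoSidedIdeal.ker f) ∧ Q *ᵥ b = Pi.single 0 1 + y := by
  obtain ⟨M, hM, hMb⟩ := hA.exists_mulVec_eq_single hkt hb
  rw [← map_elemSubmonoid f hf] at hM
  obtain ⟨Q, hQ, rfl⟩ := hM
  refine ⟨Q, hQ, Q *ᵥ b - Pi.single 0 1, fun j => ?_, by abel⟩
  rw [TwoSidedIdeal.mem_ker, Pi.sub_apply, map_sub, RingHom.map_mulVec]
  rw [RingHom.mapMatrix_apply] at hMb
  by_cases h : j = 0 <;> simp [hMb, h]

lemma erleq_of_localUnit_ker (hf : Function.Surjective f)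
    (lu : LocalUnit (TwoSidedIdeal.ker f : Set B)) {k : ℕ} (hA : ERleq A k)
    (hcorner : ∀ i, @ERleq (Corner (lu.e i)) (cornerRing (lu.idem i)) k) : ERleq B k := by
  refine erleq_of_forall_exists_mulVec_eq_single fun t hkt b hb => ?_
  obtain ⟨Q, hQ, y, hy, hQb⟩ := exists_elem_mulVec_eq_single_add_ker f hf hA hkt (hb.map f)
  obtain ⟨M, hM, hMQb⟩ := lu.exists_elem_mulVec_eq_single hcorner hkt hy (hQb ▸ hb.mulVec hQ)
  exact ⟨M * Q, mul_mem hM hQ, by rw [← mulVec_mulVec, hQb, hMQb]⟩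

lemma srleq_of_localUnit_ker (hf : Function.Surjective f)
    (lu : LocalUnit (TwoSidedIdeal.ker f : Set B)) {n : ℕ} (hsrA : SRleq A (n + 1))
    (herA : ERleq A n)
    (hcorner : ∀ i, @SRleq (Corner (lu.e i)) (cornerRing (lu.idem i)) (n + 1)) :
    SRleq B (n + 1) := by
  intro m hm b hb
  obtain ⟨m, rfl⟩ := Nat.exists_eq_add_one_of_ne_zero (by omega : m ≠ 0)
  obtain ⟨c, s, rfl⟩ : ∃ c s, b = Fin.snoc c s := ⟨_, _, (Fin.snoc_init_self b).symm⟩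
  have hbA := hsrA _ hm _ (hb.map f)
  rw [Fin.comp_snoc] at hbA
  obtain ⟨vA, hvA⟩ := reducible_snoc_iff.1 hbA
  choose v hv using fun i => hf (vA i)
  obtain ⟨Q, hQ, y, hy, hQc⟩ := exists_elem_mulVec_eq_single_add_ker f hf herA (by omega)
    (b := c + fun i => v i * s) (by convert hvA; ext; simp [hv])
  refine Reducible.of_snoc_add_mul (v := v) (Reducible.of_snoc_mulVec hQ ?_)
  have hu := (hb.snoc_add_mul v).snoc_mulVec hQ
  rw [hQc] at hu ⊢
  exact lu.reducible_snoc_single_add hcorner (by omega) hy hu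

end Extension

/-- Lemma 1.8(3): let `A` be unital with `sr(A) = n` and `er(A) < n`, and let
`0 → I → B → A → 0` be a unital extension.  If `I` has a local unit `(g_i)` of idempotents
with `sr(g_i I g_i) ≤ n` and `er(g_i I g_i) < n` for all `i`, then `sr(B) = n` and
`er(B) < n`. -/
theorem sr_er_extension_with_local_unit
    {A B : Type*} [Ring A] [Ring B] (n : ℕ)
    (hsr : sr A = n) (her : er A < (n : ℕ∞))
    (f : B →+* A) (hf : Function.Surjective f)
    (lu : LocalUnit ((TwoSidedIdeal.ker f : TwoSidedIdeal B) : Set B))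
    (hcorner : ∀ i : lu.ι,
      @sr (Corner (lu.e i)) (cornerRing (lu.idem i)) ≤ (n : ℕ∞) ∧
      @er (Corner (lu.e i)) (cornerRing (lu.idem i)) < (n : ℕ∞)) :
    sr B = n ∧ er B < n := by
  obtain ⟨n, rfl⟩ := Nat.exists_eq_add_one_of_ne_zero (n := n) fun h => by simp [h] at her
  have herA : ERleq A n := erleq_of_er_lt her
  have herB : ERleq B n := erleq_of_localUnit_ker f hf lu herA
    fun i => @erleq_of_er_lt _ (cornerRing (lu.idem i)) _ (hcorner i).2
  have hsrB : SRleq B (n + 1) := srleq_of_localUnit_ker f hf lu (srleq_of_sr_le hsr.le) herA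
    fun i => @srleq_of_sr_le _ (cornerRing (lu.idem i)) _ (hcorner i).1
  refine ⟨le_antisymm (sr_le_of_srleq hsrB) (hsr ▸ sr_le_sr_of_surjective f hf), ?_⟩
  exact (er_le_of_erleq herB).trans_lt (by exact_mod_cast n.lt_succ_self)
end

section
/- Let R be a unital ring with sr(R) = n and er(R) ≤ n − 1, and let 0 → I → B → R → 0 be a unital extension with sr(I) ≤ n. Then every unimodular (n+1)-column over B whose image in R is the standard column (1,0,…,0)ᵗ lies in the relative unimodular set U_c(n+1, I), and hence is reducible over B. -/
/-!
A unimodular column `b` over `B` whose image under `f` is the standard column is already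
`I`-unimodular for `I = ker f`: if `∑ aᵢ bᵢ = 1`, the coefficients `(1 - b₀) aᵢ + δᵢ₀` have
the required shape because `1 - b₀ ∈ I`, and still give `(1 - b₀) · 1 + b₀ = 1`.
Reducibility within `I`, which `sr(I) ≤ n` provides, then yields reducibility over `B`.
-/

open scoped BigOperators

variable {R : Type*}

section

variable {B : Type*} [Ring B] {I : TwoSidedIdeal B}

theorem Unimodular.relUnimodular {m : ℕ} {b : Fin (m + 1) → B} (hb : Unimodular b)
    (hb₀ : b 0 - 1 ∈ I) (hbᵢ : ∀ i, i ≠ 0 → b i ∈ I) : RelUnimodular I b := by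
  obtain ⟨a, ha⟩ := hb
  have hc : 1 - b 0 ∈ I := by simpa using I.neg_mem hb₀
  refine ⟨hb₀, hbᵢ, fun i => (1 - b 0) * a i + Pi.single (M := fun _ => B) 0 1 i, ?_, ?_, ?_⟩
  · simpa using I.mul_mem_right _ (a 0) hc
  · intro i hi
    simpa [hi] using I.mul_mem_right _ (a i) hc
  · calc ∑ i, ((1 - b 0) * a i + Pi.single (M := fun _ => B) 0 1 i) * b i
        = (1 - b 0) * ∑ i, a i * b i + ∑ i, Pi.single (M := fun _ => B) 0 1 i * b i := by
          simp only [add_mul, mul_assoc, Finset.sum_add_distrib, Finset.mul_sum]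
      _ = 1 := by simp [ha, Pi.single_apply]

theorem RelUnimodular.unimodular {m : ℕ} {b : Fin (m + 1) → B} (hb : RelUnimodular I b) :
    Unimodular b :=
  let ⟨_, _, a, _, _, ha⟩ := hb
  ⟨a, ha⟩

theorem RelReducible.reducible {m : ℕ} {b : Fin (m + 2) → B} (hb : RelReducible I b) :
    Reducible b :=
  let ⟨v, _, hv⟩ := hb
  ⟨v, hv.unimodular⟩

theorem RelUnimodular.of_map_eq_standard [Ring R] {f : B →+* R} {m : ℕ}
    {b : Fin (m + 1) → B} (hb : Unimodular b)
    (hstd : (fun i => f (b i)) = (fun i : Fin (m + 1) => if i = 0 then 1 else 0)) :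
    RelUnimodular (TwoSidedIdeal.ker f) b := by
  refine hb.relUnimodular ?_ fun i hi => ?_ <;> rw [TwoSidedIdeal.mem_ker]
  · rw [map_sub, map_one, sub_eq_zero]
    simpa using congrFun hstd 0
  · simpa [hi] using congrFun hstd i

end

theorem unimodular_over_kernel_reducible_general
    {R B : Type*} [Ring R] [Ring B] (m : ℕ)
    (f : B →+* R)
    (hI : RelSRleq (TwoSidedIdeal.ker f) (m + 1))
    (b : Fin (m + 2) → B) (hb : Unimodular b)
    (hstd : (fun i => f (b i)) = (fun i : Fin (m + 2) => if i = 0 then 1 else 0)) :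
    RelUnimodular (TwoSidedIdeal.ker f) b ∧ Reducible b := by
  have hrel := RelUnimodular.of_map_eq_standard hb hstd
  exact ⟨hrel, (hI m le_rfl b hrel).reducible⟩

/-- The key step in Lemma 1.8(1): let `R` be unital with `sr(R) = n` and `er(R) ≤ n - 1`
(here `n = m + 1 ≥ 1`), and let `0 → I → B → R → 0` be a unital extension with `sr(I) ≤ n`.
Then every unimodular `(n+1)`-column over `B` whose image in `R` is the standard column
`(1,0,…,0)ᵗ` is `I`-unimodular, and hence is reducible over `B`. -/
theorem unimodular_over_kernel_reducible
    {R B : Type*} [Ring R] [Ring B] (m : ℕ)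
    (hsr : sr R = (m + 1 : ℕ)) (her : er R ≤ (m : ℕ∞))
    (f : B →+* R) (hf : Function.Surjective f)
    (hI : RelSRleq (TwoSidedIdeal.ker f) (m + 1))
    (b : Fin (m + 2) → B) (hb : Unimodular b)
    (hstd : (fun i => f (b i)) = (fun i : Fin (m + 2) => if i = 0 then 1 else 0)) :
    RelUnimodular (TwoSidedIdeal.ker f) b ∧ Reducible b :=
  unimodular_over_kernel_reducible_general m f hI b hb hstd
end

section
/- Let E be a finite directed graph with isolated cycles containing at least one cycle. Then there exists a hereditary and saturated subset H of E⁰ such that the quotient graph E/H contains exactly one cycle, that cycle has no exit in E/H, and E/H equals the hereditary and saturated closure (within E/H) of the vertex set of that cycle. -/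
/-- A directed graph `E = (E⁰, E¹, s, r)`. -/
structure DGraph where
  V : Type
  E : Type
  s : E → V
  r : E → V

namespace DGraph

variable (G : DGraph)

/-- A list of edges forms a path if consecutive edges are composable. -/
def IsPath (p : List G.E) : Prop := p.Chain' (fun e f => G.r e = G.s f)

/-- A closed simple path based at `v`: a nonempty path starting and ending at `v` such that
no intermediate edge has source `v`. -/
def IsClosedSimplePath (v : G.V) (p : List G.E) : Prop :=
  p ≠ [] ∧ G.IsPath p ∧
    (∀ h : p ≠ [], G.s (p.head h) = v ∧ G.r (p.getLast h) = v) ∧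
    ∀ i : Fin p.length, 0 < (i : ℕ) → G.s (p.get i) ≠ v

/-- A cycle: a nonempty closed path all of whose edges have pairwise distinct sources. -/
def IsCycle (p : List G.E) : Prop :=
  p ≠ [] ∧ G.IsPath p ∧
    (∀ h : p ≠ [], G.r (p.getLast h) = G.s (p.head h)) ∧ (p.map G.s).Nodup

/-- The graph `G` has isolated cycles: whenever two closed simple paths share the source of
some of their edges, the corresponding edges coincide. -/
def IsolatedCycles : Prop :=
  ∀ v w (p q : List G.E), G.IsClosedSimplePath v p → G.IsClosedSimplePath w q →
    ∀ (i : Fin p.length) (j : Fin q.length),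
      G.s (p.get i) = G.s (q.get j) → p.get i = q.get j

/-- `v ≥ w` : there is a (possibly empty) finite directed path from `v` to `w`. -/
def Reaches : G.V → G.V → Prop :=
  Relation.ReflTransGen (fun a b => ∃ e : G.E, G.s e = a ∧ G.r e = b)

/-- The relation `C ≥ C'` on cycles: some vertex of `C` reaches some vertex of `C'`. -/
def CycleGE (p q : List G.E) : Prop :=
  ∃ v w : G.V, v ∈ p.map G.s ∧ w ∈ q.map G.s ∧ G.Reaches v w

end DGraph

open DGraph

/-- `H` is hereditary: sources in `H` force ranges in `H`. -/
def DGraph.Hereditary (G : DGraph) (H : Set G.V) : Prop :=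
  ∀ e : G.E, G.s e ∈ H → G.r e ∈ H

/-- `H` is saturated: a vertex emitting at least one edge, all of whose ranges lie in `H`,
lies in `H`. -/
def DGraph.Saturated (G : DGraph) (H : Set G.V) : Prop :=
  ∀ v : G.V, (∃ e : G.E, G.s e = v) → (∀ e : G.E, G.s e = v → G.r e ∈ H) → v ∈ H

/-- A cycle of the quotient graph `E/H`: a cycle of `E` all of whose edges avoid `H`. -/
def DGraph.IsCycleQ (G : DGraph) (H : Set G.V) (p : List G.E) : Prop :=
  G.IsCycle p ∧ ∀ e ∈ p, G.s e ∉ H ∧ G.r e ∉ H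

/-- The cycle `p` has an exit in the quotient graph `E/H`: some vertex on `p` emits an edge
of `E/H` not belonging to `p`. -/
def DGraph.HasExitQ (G : DGraph) (H : Set G.V) (p : List G.E) : Prop :=
  ∃ e : G.E, G.s e ∈ p.map G.s ∧ G.r e ∉ H ∧ e ∉ p

/-- `K` is a hereditary subset of the quotient graph `E/H`. -/
def DGraph.HereditaryQ (G : DGraph) (H : Set G.V) (K : Set G.V) : Prop :=
  ∀ e : G.E, G.r e ∉ H → G.s e ∈ K → G.r e ∈ K

/-- `K` is a saturated subset of the quotient graph `E/H`. -/
def DGraph.SaturatedQ (G : DGraph) (H : Set G.V) (K : Set G.V) : Prop :=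
  ∀ v : G.V, v ∉ H → (∃ e : G.E, G.s e = v ∧ G.r e ∉ H) →
    (∀ e : G.E, G.s e = v → G.r e ∉ H → G.r e ∈ K) → v ∈ K

/-!
Pick a vertex `c` on a cycle `p` whose set of reachable vertices is maximal among vertices on
cycles, and let `H` be the set of vertices that cannot reach `c`. Because cycles are isolated,
an edge out of `p` whose range reaches back to `p` is an edge of `p`, so every vertex that
reaches `p` and is reached from `p` lies on `p`. Maximality of `c` makes every cycle of `E/H`
such a vertex set, hence a rotation of `p`, and `p` has no exit in `E/H`. Any other vertex of
`E/H` cannot lie on a cycle, so each of its edges into `E/H` leads to a vertex with strictly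
fewer reachable vertices; well-founded induction then puts it in every saturated subset of
`E/H` containing `p`.
-/

namespace DGraph

variable {G : DGraph}

theorem isPath_singleton (e : G.E) : G.IsPath [e] := List.isChain_singleton e

theorem isPath_cons_cons {e f : G.E} {l : List G.E} :
    G.IsPath (e :: f :: l) ↔ G.r e = G.s f ∧ G.IsPath (f :: l) :=
  List.isChain_cons_cons

theorem isPath_append {l₁ l₂ : List G.E} :
    G.IsPath (l₁ ++ l₂) ↔ G.IsPath l₁ ∧ G.IsPath l₂ ∧
      ∀ e ∈ l₁.getLast?, ∀ f ∈ l₂.head?, G.r e = G.s f :=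
  List.isChain_append

theorem IsPath.suffix {l l' : List G.E} (h : G.IsPath l) (h' : l' <:+ l) : G.IsPath l' :=
  List.IsChain.suffix h h'

theorem IsPath.range_getElem {p : List G.E} (hp : G.IsPath p) {i : ℕ} (hi : i + 1 < p.length) :
    G.r p[i] = G.s p[i + 1] :=
  List.isChain_iff_getElem.mp hp i hi

theorem reaches_of_edge (e : G.E) : G.Reaches (G.s e) (G.r e) :=
  Relation.ReflTransGen.single ⟨e, rfl, rfl⟩

theorem IsPath.reaches_of_mem {e : G.E} {l : List G.E} (hp : G.IsPath (e :: l)) {f : G.E}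
    (hf : f ∈ e :: l) :
    G.Reaches (G.s e) (G.s f) ∧
      G.Reaches (G.s f) (G.r ((e :: l).getLast (List.cons_ne_nil e l))) := by
  induction l generalizing e f with
  | nil =>
    obtain rfl := List.mem_singleton.mp hf
    exact ⟨.refl, reaches_of_edge f⟩
  | cons g l ih =>
    obtain ⟨heg, hgl⟩ := isPath_cons_cons.mp hp
    have hstep : G.Reaches (G.s e) (G.s g) := heg ▸ reaches_of_edge e
    rw [List.getLast_cons_cons]
    rcases List.mem_cons.mp hf with rfl | hf
    · exact ⟨.refl, hstep.trans (ih hgl List.mem_cons_self).2⟩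
    · exact ⟨hstep.trans (ih hgl hf).1, (ih hgl hf).2⟩

-- The walk is built backwards from `v`; whenever the new source already occurs, the loop
-- in between is cut out.
theorem exists_path_cons_of_reaches {x v : G.V} (h : G.Reaches x v) {e : G.E}
    (he : G.r e = x) :
    ∃ l, G.IsPath (e :: l) ∧ G.r ((e :: l).getLast (List.cons_ne_nil e l)) = v ∧
      (l.map G.s).Nodup ∧ v ∉ l.map G.s := by
  induction h using Relation.ReflTransGen.head_induction_on generalizing e with
  | refl => exact ⟨[], isPath_singleton e, he, List.nodup_nil, List.not_mem_nil⟩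
  | head hxy _ ih =>
    obtain ⟨f, rfl, rfl⟩ := hxy
    obtain ⟨l, hpath, hlast, hnd, hv⟩ := ih rfl
    by_cases hfv : G.s f = v
    · exact ⟨[], isPath_singleton e, he.trans hfv, List.nodup_nil, List.not_mem_nil⟩
    by_cases hfl : G.s f ∈ l.map G.s
    · obtain ⟨g, hg, hgs⟩ := List.mem_map.mp hfl
      obtain ⟨l₁, l₂, rfl⟩ := List.append_of_mem hg
      have hsub : List.Sublist ((g :: l₂).map G.s) ((l₁ ++ g :: l₂).map G.s) :=
        (List.sublist_append_right l₁ _).map _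
      have hgl : G.IsPath (g :: l₂) := hpath.suffix ⟨f :: l₁, rfl⟩
      refine ⟨g :: l₂, isPath_cons_cons.mpr ⟨he.trans hgs.symm, hgl⟩, ?_, hnd.sublist hsub,
        fun h => hv (hsub.subset h)⟩
      rw [← hlast, List.getLast_cons_cons]
      simp
    · refine ⟨f :: l, isPath_cons_cons.mpr ⟨he, hpath⟩, ?_, List.nodup_cons.mpr ⟨hfl, hnd⟩,
        ?_⟩
      · rwa [List.getLast_cons_cons]
      · simpa [Ne.symm hfv] using hv

theorem exists_isCycle_cons_of_reaches {e : G.E} (h : G.Reaches (G.r e) (G.s e)) :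
    ∃ l, G.IsCycle (e :: l) := by
  obtain ⟨l, hpath, hlast, hnd, hv⟩ := exists_path_cons_of_reaches h rfl
  exact ⟨l, List.cons_ne_nil e l, hpath, fun _ => hlast, List.nodup_cons.mpr ⟨hv, hnd⟩⟩

theorem IsCycle.reaches {p : List G.E} (hp : G.IsCycle p) {u w : G.V} (hu : u ∈ p.map G.s)
    (hw : w ∈ p.map G.s) : G.Reaches u w := by
  obtain ⟨hne, hpath, hclosed, -⟩ := hp
  obtain ⟨e, l, rfl⟩ := List.exists_cons_of_ne_nil hne
  obtain ⟨f, hf, rfl⟩ := List.mem_map.mp hu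
  obtain ⟨g, hg, rfl⟩ := List.mem_map.mp hw
  exact (hpath.reaches_of_mem hf).2.trans (hclosed hne ▸ (hpath.reaches_of_mem hg).1)

theorem IsCycle.range_mem {p : List G.E} (hp : G.IsCycle p) {e : G.E} (he : e ∈ p) :
    G.r e ∈ p.map G.s := by
  obtain ⟨hne, hpath, hclosed, -⟩ := hp
  obtain ⟨l₁, l₂, rfl⟩ := List.append_of_mem he
  cases l₂ with
  | nil =>
    have h := hclosed hne
    rw [List.getLast_append_singleton] at h
    exact h ▸ List.mem_map_of_mem (List.head_mem hne)
  | cons f l₂ =>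
    have hef := (isPath_cons_cons.mp (isPath_append.mp hpath).2.1).1
    exact hef ▸ List.mem_map_of_mem (by simp)

theorem IsCycle.isClosedSimplePath {e : G.E} {l : List G.E} (hp : G.IsCycle (e :: l)) :
    G.IsClosedSimplePath (G.s e) (e :: l) := by
  obtain ⟨hne, hpath, hclosed, hnd⟩ := hp
  refine ⟨hne, hpath, fun h => ⟨rfl, hclosed h⟩, fun i hi hsi => ?_⟩
  have := (hnd.getElem_inj_iff (i := i) (j := 0) (hi := by simpa using i.2) (hj := by simp)).mp
    (by rw [List.getElem_map, List.getElem_map]; simpa using hsi)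
  omega

theorem IsCycle.exists_isRotated_cons {p : List G.E} (hp : G.IsCycle p) {e : G.E}
    (he : e ∈ p) : ∃ l, G.IsCycle (e :: l) ∧ e :: l ~r p := by
  obtain ⟨l₁, l₂, rfl⟩ := List.append_of_mem he
  rcases eq_or_ne l₁ [] with rfl | hl₁
  · exact ⟨l₂, hp, .refl _⟩
  obtain ⟨hne, hpath, hclosed, hnd⟩ := hp
  obtain ⟨hpath₁, hpath₂, hjoin⟩ := isPath_append.mp hpath
  have hrot : (e :: l₂) ++ l₁ ~r l₁ ++ e :: l₂ := List.isRotated_append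
  refine ⟨l₂ ++ l₁, ⟨List.cons_ne_nil _ _, ?_, fun _ => ?_,
    (hrot.map G.s).perm.nodup_iff.mpr hnd⟩, hrot⟩
  · refine List.cons_append .. ▸ isPath_append.mpr ⟨hpath₂, hpath₁, fun x hx y hy => ?_⟩
    have hc := hclosed hne
    rw [List.getLast_append_of_ne_nil _ (List.cons_ne_nil e l₂),
      List.head_append_of_ne_nil hl₁] at hc
    rw [List.getLast?_eq_some_getLast (List.cons_ne_nil e l₂), Option.mem_some_iff] at hx
    rw [List.head?_eq_some_head hl₁, Option.mem_some_iff] at hy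
    subst hx hy
    exact hc
  · rw [List.head_cons, List.getLast_cons (by simp [hl₁]),
      List.getLast_append_of_ne_nil _ hl₁]
    exact hjoin _ (List.getLast?_eq_some_getLast hl₁) e rfl

theorem IsCycle.length_le_of_getElem_eq {p q : List G.E} (hp : G.IsCycle p) (hq : G.IsCycle q)
    (h : ∀ i (hip : i < p.length) (hiq : i < q.length), p[i] = q[i]) :
    q.length ≤ p.length := by
  by_contra! hlt
  have hn : 0 < p.length := List.length_pos_iff.mpr hp.1
  -- `q` would return to its base vertex after `p.length` steps, like `p` does.
  have hsrc : G.s q[p.length] = G.s q[0] := by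
    have hlast := hp.2.2.1 hp.1
    rw [List.getLast_eq_getElem, List.head_eq_getElem, h 0 hn (by omega),
      h (p.length - 1) (by omega) (by omega)] at hlast
    rw [← hlast, hq.2.1.range_getElem (i := p.length - 1) (by omega)]
    congr 2
    omega
  have := (hq.2.2.2.getElem_inj_iff (i := p.length) (j := 0) (hi := by simpa using hlt)
    (hj := by simpa using hn.trans hlt)).mp (by rw [List.getElem_map, List.getElem_map, hsrc])
  omega

namespace IsolatedCycles

theorem eq_of_src_eq (hiso : G.IsolatedCycles) {p q : List G.E} (hp : G.IsCycle p)
    (hq : G.IsCycle q) {e f : G.E} (he : e ∈ p) (hf : f ∈ q) (hs : G.s e = G.s f) : e = f := by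
  obtain ⟨a, l, rfl⟩ := List.exists_cons_of_ne_nil hp.1
  obtain ⟨b, m, rfl⟩ := List.exists_cons_of_ne_nil hq.1
  obtain ⟨i, rfl⟩ := List.mem_iff_get.mp he
  obtain ⟨j, rfl⟩ := List.mem_iff_get.mp hf
  exact hiso _ _ _ _ hp.isClosedSimplePath hq.isClosedSimplePath i j hs

theorem eq_of_head_eq (hiso : G.IsolatedCycles) {e : G.E} {l m : List G.E}
    (hl : G.IsCycle (e :: l)) (hm : G.IsCycle (e :: m)) : e :: l = e :: m := by
  have h : ∀ i (hil : i < (e :: l).length) (him : i < (e :: m).length),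
      (e :: l)[i] = (e :: m)[i] := by
    intro i
    induction i with
    | zero => intros; rfl
    | succ i ih =>
      intro hil him
      refine hiso.eq_of_src_eq hl hm (List.getElem_mem _) (List.getElem_mem _) ?_
      rw [← hl.2.1.range_getElem hil, ← hm.2.1.range_getElem him, ih]
  exact List.ext_getElem
    (le_antisymm (hm.length_le_of_getElem_eq hl fun i h₁ h₂ => (h i h₂ h₁).symm)
      (hl.length_le_of_getElem_eq hm h)) (fun i h₁ h₂ => h i h₁ h₂)

theorem mem_of_reaches_src (hiso : G.IsolatedCycles) {p : List G.E} (hp : G.IsCycle p)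
    {e : G.E} (hs : G.s e ∈ p.map G.s) (hr : G.Reaches (G.r e) (G.s e)) : e ∈ p := by
  obtain ⟨l, hq⟩ := exists_isCycle_cons_of_reaches hr
  obtain ⟨f, hf, hfs⟩ := List.mem_map.mp hs
  rwa [hiso.eq_of_src_eq hq hp List.mem_cons_self hf hfs.symm]

theorem mem_map_of_reaches_of_reaches (hiso : G.IsolatedCycles) {p : List G.E}
    (hp : G.IsCycle p) {u w : G.V} (hu : u ∈ p.map G.s) (huw : G.Reaches u w)
    (hwu : G.Reaches w u) : w ∈ p.map G.s := by
  induction huw using Relation.ReflTransGen.head_induction_on with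
  | refl => exact hu
  | head hux hxw ih =>
    obtain ⟨e, rfl, rfl⟩ := hux
    exact ih (hp.range_mem (hiso.mem_of_reaches_src hp hu (hxw.trans hwu)))
      (hwu.trans (reaches_of_edge e))

end IsolatedCycles

def IsOnCycle (G : DGraph) (v : G.V) : Prop := ∃ p, G.IsCycle p ∧ v ∈ p.map G.s

-- Plays the role of the paper's `H`, with `c` on its maximal cycle `C₁`.
def cannotReach (G : DGraph) (c : G.V) : Set G.V := {v | ¬ G.Reaches v c}

theorem notMem_cannotReach {c v : G.V} : v ∉ G.cannotReach c ↔ G.Reaches v c := not_not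

theorem hereditary_cannotReach (c : G.V) : G.Hereditary (G.cannotReach c) :=
  fun e he hr => he ((reaches_of_edge e).trans hr)

theorem IsCycle.saturated_cannotReach {p : List G.E} (hp : G.IsCycle p) {c : G.V}
    (hc : c ∈ p.map G.s) : G.Saturated (G.cannotReach c) := by
  intro v _ hall
  by_contra hv
  rcases (notMem_cannotReach.mp hv).cases_head with rfl | ⟨x, ⟨f, hf, rfl⟩, hx⟩
  · obtain ⟨e, he, hs⟩ := List.mem_map.mp hc
    exact hall e hs (hp.reaches (hp.range_mem he) hc)
  · exact hall f hf hx

theorem IsCycle.isCycleQ_cannotReach {q : List G.E} (hq : G.IsCycle q) {u c : G.V}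
    (hu : u ∈ q.map G.s) (huc : G.Reaches u c) : G.IsCycleQ (G.cannotReach c) q :=
  ⟨hq, fun _ he => ⟨notMem_cannotReach.mpr ((hq.reaches (List.mem_map_of_mem he) hu).trans huc),
    notMem_cannotReach.mpr ((hq.reaches (hq.range_mem he) hu).trans huc)⟩⟩

theorem IsolatedCycles.not_hasExitQ_cannotReach (hiso : G.IsolatedCycles) {p : List G.E}
    (hp : G.IsCycle p) {c : G.V} (hc : c ∈ p.map G.s) : ¬ G.HasExitQ (G.cannotReach c) p := by
  rintro ⟨e, hs, hr, hep⟩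
  exact hep (hiso.mem_of_reaches_src hp hs ((notMem_cannotReach.mp hr).trans (hp.reaches hc hs)))

-- Maximise the set of vertices reachable from `c`, ordered by inclusion.
theorem exists_maximal_isOnCycle [Finite G.V] (h : ∃ p, G.IsCycle p) :
    ∃ c, G.IsOnCycle c ∧ ∀ w, G.IsOnCycle w → G.Reaches w c → G.Reaches c w := by
  obtain ⟨p, hp⟩ := h
  obtain ⟨c, hc, hmax⟩ := Set.Finite.exists_maximalFor (fun v => {u | G.Reaches v u})
    {v | G.IsOnCycle v} (Set.toFinite _) ⟨_, p, hp, List.mem_map_of_mem (List.head_mem hp.1)⟩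
  exact ⟨c, hc, fun w hw hwc => hmax hw (fun u hu => hwc.trans hu) .refl⟩

theorem IsolatedCycles.isRotated_of_isCycleQ_cannotReach (hiso : G.IsolatedCycles)
    {p : List G.E} (hp : G.IsCycle p) {c : G.V} (hc : c ∈ p.map G.s)
    (hmax : ∀ w, G.IsOnCycle w → G.Reaches w c → G.Reaches c w) {q : List G.E}
    (hq : G.IsCycleQ (G.cannotReach c) q) : q ~r p := by
  obtain ⟨e, l, rfl⟩ := List.exists_cons_of_ne_nil hq.1.1
  have hec : G.Reaches (G.s e) c := notMem_cannotReach.mp (hq.2 e List.mem_cons_self).1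
  have hep : G.s e ∈ p.map G.s := hiso.mem_map_of_reaches_of_reaches hp hc
    (hmax _ ⟨_, hq.1, List.mem_map_of_mem List.mem_cons_self⟩ hec) hec
  obtain ⟨f, hf, hfs⟩ := List.mem_map.mp hep
  obtain ⟨m, hm, hrot⟩ := hp.exists_isRotated_cons hf
  obtain rfl := hiso.eq_of_src_eq hm hq.1 List.mem_cons_self List.mem_cons_self hfs
  rwa [hiso.eq_of_head_eq hq.1 hm]

theorem IsolatedCycles.compl_cannotReach_subset [Finite G.V] (hiso : G.IsolatedCycles)
    {p : List G.E} (hp : G.IsCycle p) {c : G.V} (hc : c ∈ p.map G.s)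
    (hmax : ∀ w, G.IsOnCycle w → G.Reaches w c → G.Reaches c w) {K : Set G.V}
    (hK : G.SaturatedQ (G.cannotReach c) K) (hpK : {v | v ∈ p.map G.s} ⊆ K) :
    (G.cannotReach c)ᶜ ⊆ K := by
  have wf : WellFounded fun x y : G.V => {u | G.Reaches x u} < {u | G.Reaches y u} :=
    InvImage.wf _ wellFounded_lt
  intro v hv
  induction v using wf.induction with
  | _ v ih =>
  have hvc : G.Reaches v c := notMem_cannotReach.mp hv
  by_cases hvp : v ∈ p.map G.s
  · exact hpK hvp
  refine hK v hv ?_ fun f hf hr => ?_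
  · rcases hvc.cases_head with rfl | ⟨x, ⟨f, hf, rfl⟩, hx⟩
    · exact absurd hc hvp
    · exact ⟨f, hf, notMem_cannotReach.mpr hx⟩
  · -- Otherwise `v` lies on a cycle, which the maximality of `c` forces onto `p`.
    have hfv : ¬ G.Reaches (G.r f) v := fun hfv => by
      obtain ⟨l, hl⟩ := exists_isCycle_cons_of_reaches (hf ▸ hfv : G.Reaches (G.r f) (G.s f))
      exact hvp (hiso.mem_map_of_reaches_of_reaches hp hc
        (hmax v ⟨_, hl, hf ▸ List.mem_map_of_mem List.mem_cons_self⟩ hvc) hvc)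
    exact ih _ ⟨fun u hu => (hf ▸ reaches_of_edge f).trans hu, fun h => hfv (h .refl)⟩ hr

end DGraph

theorem exists_hereditary_saturated_with_unique_exitless_cycle_general
    (G : DGraph) [Fintype G.V] (hiso : G.IsolatedCycles)
    (hcycle : ∃ p : List G.E, G.IsCycle p) :
    ∃ H : Set G.V, G.Hereditary H ∧ G.Saturated H ∧
      ∃ p : List G.E, G.IsCycleQ H p ∧
        (∀ q : List G.E, G.IsCycleQ H q → q ~r p) ∧
        ¬ G.HasExitQ H p ∧
        (∀ K : Set G.V, K ⊆ Hᶜ → G.HereditaryQ H K → G.SaturatedQ H K →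
          {v | v ∈ p.map G.s} ⊆ K → K = Hᶜ) := by
  obtain ⟨c, ⟨p, hp, hc⟩, hmax⟩ := exists_maximal_isOnCycle hcycle
  refine ⟨G.cannotReach c, hereditary_cannotReach c, hp.saturated_cannotReach hc, p,
    hp.isCycleQ_cannotReach hc .refl,
    fun q hq => hiso.isRotated_of_isCycleQ_cannotReach hp hc hmax hq,
    hiso.not_hasExitQ_cannotReach hp hc,
    fun K hKH _ hKsat hpK => hKH.antisymm (hiso.compl_cannotReach_subset hp hc hmax hKsat hpK)⟩

/-- Proposition 2.8 (key step): a finite graph with isolated cycles containing at least one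
cycle admits a hereditary saturated subset `H` of vertices such that the quotient graph
`E/H` has exactly one cycle (up to rotation), that cycle has no exit in `E/H`, and `E/H`
coincides with the hereditary saturated closure of the vertex set of that cycle, i.e. the
only hereditary saturated subset of `E/H` containing the vertices of the cycle is all of
`E/H`. -/
theorem exists_hereditary_saturated_with_unique_exitless_cycle
    (G : DGraph) [Fintype G.V] [Fintype G.E] (hiso : G.IsolatedCycles)
    (hcycle : ∃ p : List G.E, G.IsCycle p) :
    ∃ H : Set G.V, G.Hereditary H ∧ G.Saturated H ∧
      ∃ p : List G.E, G.IsCycleQ H p ∧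
        (∀ q : List G.E, G.IsCycleQ H q → q ~r p) ∧
        ¬ G.HasExitQ H p ∧
        (∀ K : Set G.V, K ⊆ Hᶜ → G.HereditaryQ H K → G.SaturatedQ H K →
          {v | v ∈ p.map G.s} ⊆ K → K = Hᶜ) :=
  exists_hereditary_saturated_with_unique_exitless_cycle_general G hiso hcycle
end
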